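/- Let X be a real ordered Banach space with closed generating positive cone X₊ on which the norm is additive. Then X₊ has the strong Levi property: every increasing norm-bounded sequence in X₊ is norm convergent to an element of X₊. -/
import Mathlib


theorem stmt1 {X : Type*} [NormedAddCommGroup X] [NormedSpace ℝ X] [CompleteSpace X]
    [PartialOrder X] [CovariantClass X X (· + ·) (· ≤ ·)]
    (hclosed : IsClosed {g : X | 0 ≤ g})
    (hgen : ∀ g : X, ∃ a b : X, 0 ≤ a ∧ 0 ≤ b ∧ g = a - b)
    (hadd : ∀ g h : X, 0 ≤ g → 0 ≤ h → ‖g + h‖ = ‖g‖ + ‖h‖) :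
    ∀ g : ℕ → X, (∀ n, 0 ≤ g n) → Monotone g → (∃ C : ℝ, ∀ n, ‖g n‖ ≤ C) →
      ∃ l : X, 0 ≤ l ∧ Filter.Tendsto g Filter.atTop (nhds l) := by
  intro g hpos hmono ⟨C, hC⟩
  -- key: for m ≤ n, ‖g n - g m‖ = ‖g n‖ - ‖g m‖
  have key : ∀ m n : ℕ, m ≤ n → ‖g n - g m‖ = ‖g n‖ - ‖g m‖ := by
    intro m n hmn
    have hd : (0:X) ≤ g n - g m := sub_nonneg.mpr (hmono hmn)
    have := hadd (g m) (g n - g m) (hpos m) hd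
    rw [add_sub_cancel] at this
    linarith
  -- norms form a monotone bounded real sequence, hence Cauchy
  have hmonoN : Monotone (fun n => ‖g n‖) := by
    intro m n hmn
    have := key m n hmn
    have := norm_nonneg (g n - g m)
    simp only []
    linarith
  have hconvN : ∃ L : ℝ, Filter.Tendsto (fun n => ‖g n‖) Filter.atTop (nhds L) :=
    ⟨_, tendsto_atTop_ciSup hmonoN ⟨C, fun x ⟨n, hn⟩ => hn ▸ hC n⟩⟩
  obtain ⟨L, hL⟩ := hconvN
  have hcauchyN : CauchySeq (fun n => ‖g n‖) := hL.cauchySeq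
  have hcauchy : CauchySeq g := by
    rw [Metric.cauchySeq_iff] at hcauchyN ⊢
    intro ε hε
    obtain ⟨N, hN⟩ := hcauchyN ε hε
    refine ⟨N, fun n hn m hm => ?_⟩
    rcases le_total m n with h | h
    · have h2 := hN n hn m hm
      rw [Real.dist_eq] at h2
      rw [dist_eq_norm, key m n h]
      exact lt_of_le_of_lt (le_abs_self _) h2
    · have := hN m hm n hn
      rw [Real.dist_eq] at this
      rw [dist_eq_norm, ← norm_neg, neg_sub, key n m h]
      exact lt_of_le_of_lt (le_abs_self _) this
  obtain ⟨l, hl⟩ := cauchySeq_tendsto_of_complete hcauchy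
  refine ⟨l, ?_, hl⟩
  exact hclosed.mem_of_tendsto hl (Filter.Eventually.of_forall hpos)
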